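/- Let 0 ≤ μ ≤ 1/2 and μ² < ν ≤ μ/2 (so (μ,ν) is feasible and not the exceptional point (1/2, 1/4)). Then the supremum of V_∞(π) = π((1/2,1]) + (1/2)π({1/2}) over all probability measures π on [0,1] with first moment μ and second moment ν equals (ν − μ²)/(ν + 1/4 − μ). The supremum is sharp: it is the limit of V_∞ along a sequence of feasible two-point laws, though it need not be attained. -/

import Mathlib

open MeasureTheory Filter

/-- The infinite-vote endpoint `V_∞(π) = π((1/2, 1]) + (1/2) π({1/2})`. -/
noncomputable def Vinf (π : Measure ℝ) : ℝ :=
  (π (Set.Ioc (1 / 2 : ℝ) 1)).toReal + (1 / 2) * (π {(1 / 2 : ℝ)}).toReal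

/-- The two-moment class `M(μ,ν)`: probability measures on `[0,1]` with first moment `μ`
and second moment `ν`. -/
def momentClass (μ ν : ℝ) : Set (Measure ℝ) :=
  {π | IsProbabilityMeasure π ∧ π ((Set.Icc (0 : ℝ) 1)ᶜ) = 0 ∧
    (∫ q, q ∂π) = μ ∧ (∫ q, q ^ 2 ∂π) = ν}

/-!
Upper bound: for every `a < 1/2` the threshold function is dominated by the parabola
`(x - a)² / (1/2 - a)²`, whose integral against `π ∈ M(μ,ν)` depends only on `μ` and `ν`;
minimising over `a` gives `(ν - μ²)/(ν + 1/4 - μ)`.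
Sharpness: the two-point law of `M(μ,ν)` with upper atom `b ∈ (1/2, 1]` has `V_∞` equal to
its mass at `b`, which tends to the bound as `b ↓ 1/2`; the conditions `μ² < ν ≤ μ/2` are
what put its lower atom in `[0, μ)`.
-/

open Set Topology

-- The threshold function `h`, cut off outside `[0, 1]`.
noncomputable def threshold : ℝ → ℝ :=
  (Ioc (1 / 2 : ℝ) 1).indicator 1 + (1 / 2 : ℝ) • ({1 / 2} : Set ℝ).indicator 1

lemma integrable_threshold (π : Measure ℝ) [IsFiniteMeasure π] : Integrable threshold π :=
  ((integrable_const 1).indicator measurableSet_Ioc).add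
    (((integrable_const 1).indicator (measurableSet_singleton _)).smul _)

lemma Vinf_eq_integral_threshold (π : Measure ℝ) [IsFiniteMeasure π] :
    Vinf π = ∫ x, threshold x ∂π := by
  have h₁ : Integrable ((Ioc (1 / 2 : ℝ) 1).indicator (1 : ℝ → ℝ)) π :=
    (integrable_const 1).indicator measurableSet_Ioc
  have h₂ : Integrable (({1 / 2} : Set ℝ).indicator (1 : ℝ → ℝ)) π :=
    (integrable_const 1).indicator (measurableSet_singleton _)
  simp only [threshold, Pi.add_apply, Pi.smul_apply, smul_eq_mul]
  rw [integral_add h₁ (h₂.const_mul _), integral_const_mul,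
    integral_indicator_one measurableSet_Ioc, integral_indicator_one (measurableSet_singleton _)]
  rfl

lemma threshold_le_sq_div {a : ℝ} (ha : a < 1 / 2) (x : ℝ) :
    threshold x ≤ (x - a) ^ 2 / (1 / 2 - a) ^ 2 := by
  have hc : 0 < 1 / 2 - a := by linarith
  rw [le_div_iff₀ (by positivity)]
  simp only [threshold, Pi.add_apply, Pi.smul_apply, smul_eq_mul]
  by_cases hx : x ∈ Ioc (1 / 2 : ℝ) 1
  · rw [indicator_of_mem hx, indicator_of_notMem (s := {1 / 2}) hx.1.ne', Pi.one_apply]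
    nlinarith [hx.1]
  rw [indicator_of_notMem hx, zero_add]
  by_cases hx' : x = 1 / 2
  · rw [hx', indicator_of_mem (mem_singleton _), Pi.one_apply]
    nlinarith
  · rw [indicator_of_notMem (s := {1 / 2}) hx', mul_zero, zero_mul]
    positivity

section MomentClass

variable {μ ν : ℝ} {π : Measure ℝ}

lemma integrable_of_mem_momentClass (hπ : π ∈ momentClass μ ν) {f : ℝ → ℝ}
    (hf : Continuous f) : Integrable f π := by
  obtain ⟨hprob, hsupp, -, -⟩ := hπ
  have hae : ∀ᵐ x ∂π, x ∈ Icc (0 : ℝ) 1 := by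
    simpa using measure_eq_zero_iff_ae_notMem.1 hsupp
  rw [← Measure.restrict_eq_self_of_ae_mem hae]
  exact hf.integrableOn_Icc

lemma integral_sub_sq_of_mem_momentClass (hπ : π ∈ momentClass μ ν) (a : ℝ) :
    ∫ x, (x - a) ^ 2 ∂π = ν - 2 * a * μ + a ^ 2 := by
  have h₁ : Integrable (fun x => 2 * a * x) π :=
    integrable_of_mem_momentClass hπ (by fun_prop)
  have h₂ : Integrable (fun x : ℝ => x ^ 2) π :=
    integrable_of_mem_momentClass hπ (by fun_prop)
  have h₃ : Integrable (fun x : ℝ => x ^ 2 - 2 * a * x) π :=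
    integrable_of_mem_momentClass hπ (by fun_prop)
  obtain ⟨hprob, -, hμ, hν⟩ := hπ
  calc ∫ x, (x - a) ^ 2 ∂π = ∫ x, (x ^ 2 - 2 * a * x) + a ^ 2 ∂π := by congr with x; ring
    _ = ν - 2 * a * μ + a ^ 2 := by
      rw [integral_add h₃ (integrable_const _), integral_sub h₂ h₁, integral_const_mul,
        hμ, hν, integral_const, probReal_univ, one_smul]

lemma Vinf_le_of_lt_half (hπ : π ∈ momentClass μ ν) {a : ℝ} (ha : a < 1 / 2) :
    Vinf π ≤ (ν - 2 * a * μ + a ^ 2) / (1 / 2 - a) ^ 2 := by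
  have := hπ.1
  rw [Vinf_eq_integral_threshold, ← integral_sub_sq_of_mem_momentClass hπ, ← integral_div]
  exact integral_mono (integrable_threshold π) (integrable_of_mem_momentClass hπ (by fun_prop))
    (threshold_le_sq_div ha)

lemma Vinf_le_of_mem_momentClass (hπ : π ∈ momentClass μ ν) (hμ : μ < 1 / 2)
    (hν : μ ^ 2 ≤ ν) : Vinf π ≤ (ν - μ ^ 2) / (ν + 1 / 4 - μ) := by
  have hc : 0 < 1 / 2 - μ := by linarith
  have hD : 0 < ν + 1 / 4 - μ := by nlinarith
  -- the minimiser of the bound in `Vinf_le_of_lt_half`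
  obtain ⟨a, hac⟩ : ∃ a, a * (1 / 2 - μ) = μ / 2 - ν := ⟨_, div_mul_cancel₀ _ hc.ne'⟩
  have ha : 1 / 2 - a = (ν + 1 / 4 - μ) / (1 / 2 - μ) := by
    rw [eq_div_iff hc.ne']; linear_combination -hac
  calc Vinf π ≤ (ν - 2 * a * μ + a ^ 2) / (1 / 2 - a) ^ 2 :=
        Vinf_le_of_lt_half hπ (by linarith [div_pos hD hc])
    _ = (ν - μ ^ 2) / (ν + 1 / 4 - μ) := by
        rw [ha, div_pow, div_div_eq_mul_div, div_eq_div_iff (by positivity) hD.ne']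
        linear_combination
          (ν + 1 / 4 - μ) * (a * (1 / 2 - μ) + (μ / 2 - ν) - 2 * μ * (1 / 2 - μ)) * hac

end MomentClass

noncomputable def twoPoint (p a b : ℝ) : Measure ℝ :=
  ENNReal.ofReal (1 - p) • Measure.dirac a + ENNReal.ofReal p • Measure.dirac b

section TwoPoint

variable {p : ℝ} {a b : ℝ}

lemma isProbabilityMeasure_twoPoint (hp₀ : 0 ≤ p) (hp₁ : p ≤ 1) :
    IsProbabilityMeasure (twoPoint p a b) := by
  constructor
  simp only [twoPoint, Measure.add_apply, Measure.smul_apply, smul_eq_mul, measure_univ, mul_one]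
  rw [← ENNReal.ofReal_add (by linarith) hp₀]
  norm_num

lemma integral_twoPoint (hp₀ : 0 ≤ p) (hp₁ : p ≤ 1) (f : ℝ → ℝ) :
    ∫ x, f x ∂twoPoint p a b = (1 - p) * f a + p * f b := by
  rw [twoPoint, integral_add_measure ((integrable_dirac enorm_lt_top).smul_measure (by simp))
      ((integrable_dirac enorm_lt_top).smul_measure (by simp)),
    integral_smul_measure, integral_smul_measure, integral_dirac, integral_dirac,
    ENNReal.toReal_ofReal (by linarith), ENNReal.toReal_ofReal hp₀, smul_eq_mul, smul_eq_mul]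

lemma twoPoint_apply_of_notMem {s : Set ℝ} (ha : a ∉ s) (hb : b ∉ s) :
    twoPoint p a b s = 0 := by
  simp [twoPoint, Measure.dirac_apply, ha, hb]

lemma twoPoint_real_apply_of_notMem_of_mem {s : Set ℝ} (hp₀ : 0 ≤ p) (ha : a ∉ s)
    (hb : b ∈ s) : (twoPoint p a b s).toReal = p := by
  simp [twoPoint, Measure.dirac_apply, ha, hb, ENNReal.toReal_ofReal hp₀]

lemma twoPoint_mem_momentClass (hp₀ : 0 ≤ p) (hp₁ : p ≤ 1) (ha : a ∈ Icc (0 : ℝ) 1)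
    (hb : b ∈ Icc (0 : ℝ) 1) :
    twoPoint p a b ∈ momentClass ((1 - p) * a + p * b) ((1 - p) * a ^ 2 + p * b ^ 2) :=
  ⟨isProbabilityMeasure_twoPoint hp₀ hp₁,
    twoPoint_apply_of_notMem (not_not.2 ha) (not_not.2 hb), integral_twoPoint hp₀ hp₁ _,
    integral_twoPoint hp₀ hp₁ _⟩

lemma Vinf_twoPoint (hp₀ : 0 ≤ p) (ha : a < 1 / 2) (hb : b ∈ Ioc (1 / 2 : ℝ) 1) :
    Vinf (twoPoint p a b) = p := by
  have ha' : a ∉ Ioc (1 / 2 : ℝ) 1 := fun h => absurd h.1 (not_lt.2 ha.le)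
  rw [Vinf, twoPoint_real_apply_of_notMem_of_mem hp₀ ha' hb,
    twoPoint_apply_of_notMem (s := {1 / 2}) ha.ne (ne_of_gt hb.1)]
  simp

end TwoPoint

-- The lower atom and the mass at `b` of the two-point law with upper atom `b`, mean `μ` and
-- second moment `ν`.
noncomputable def lowerAtom (μ ν b : ℝ) : ℝ := (μ * b - ν) / (b - μ)

noncomputable def upperMass (μ ν b : ℝ) : ℝ := (ν - μ ^ 2) / ((b - μ) ^ 2 + (ν - μ ^ 2))

section ExtremalLaw

variable {μ ν b : ℝ}

lemma moments_lowerAtom_upperMass (hb : μ < b) (hν : μ ^ 2 < ν) :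
    (1 - upperMass μ ν b) * lowerAtom μ ν b + upperMass μ ν b * b = μ ∧
      (1 - upperMass μ ν b) * lowerAtom μ ν b ^ 2 + upperMass μ ν b * b ^ 2 = ν := by
  have hb' : b - μ ≠ 0 := by linarith
  have hden : (b - μ) ^ 2 + (ν - μ ^ 2) ≠ 0 := by positivity
  unfold lowerAtom upperMass
  constructor <;> (field_simp; ring)

lemma upperMass_nonneg (hν : μ ^ 2 ≤ ν) : 0 ≤ upperMass μ ν b :=
  div_nonneg (by linarith) (by positivity)

lemma upperMass_le_one (hν : μ ^ 2 ≤ ν) : upperMass μ ν b ≤ 1 :=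
  div_le_one_of_le₀ (le_add_of_nonneg_left (sq_nonneg _)) (by positivity)

lemma lowerAtom_nonneg (hb : μ < b) (hν : ν ≤ μ * b) : 0 ≤ lowerAtom μ ν b :=
  div_nonneg (by linarith) (by linarith)

lemma lowerAtom_lt (hb : μ < b) (hν : μ ^ 2 < ν) : lowerAtom μ ν b < μ := by
  rw [lowerAtom, div_lt_iff₀ (by linarith)]
  nlinarith

lemma tendsto_upperMass (hD : ν + 1 / 4 - μ ≠ 0) :
    Tendsto (upperMass μ ν) (𝓝 (1 / 2)) (𝓝 ((ν - μ ^ 2) / (ν + 1 / 4 - μ))) := by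
  have hden : Continuous fun b : ℝ => (b - μ) ^ 2 + (ν - μ ^ 2) := by fun_prop
  exact tendsto_const_nhds.div (hden.tendsto' _ _ (by ring)) hD

lemma twoPoint_lowerAtom_mem_momentClass (hν₁ : μ ^ 2 < ν) (hν₂ : ν ≤ μ / 2)
    (hb : b ∈ Ioc (1 / 2 : ℝ) 1) :
    twoPoint (upperMass μ ν b) (lowerAtom μ ν b) b ∈ momentClass μ ν := by
  have hμ₀ : 0 < μ := by nlinarith
  have hμb : μ < b := by nlinarith [hb.1]
  obtain ⟨hmean, hsq⟩ := moments_lowerAtom_upperMass hμb hν₁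
  have hlow : lowerAtom μ ν b ∈ Icc (0 : ℝ) 1 :=
    ⟨lowerAtom_nonneg hμb (by nlinarith [hb.1]), by linarith [lowerAtom_lt hμb hν₁, hb.2]⟩
  have h := twoPoint_mem_momentClass (upperMass_nonneg (b := b) hν₁.le)
    (upperMass_le_one hν₁.le) hlow ⟨by linarith [hb.1], hb.2⟩
  rwa [hmean, hsq] at h

end ExtremalLaw

theorem endpoint_fractional_branch_general (μ ν : ℝ) (hν1 : μ ^ 2 < ν) (hν2 : ν ≤ μ / 2) :
    IsLUB {x | ∃ π ∈ momentClass μ ν, Vinf π = x} ((ν - μ ^ 2) / (ν + 1 / 4 - μ)) ∧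
    ∃ πs : ℕ → Measure ℝ,
      (∀ k, πs k ∈ momentClass μ ν ∧
        ∃ s : Finset ℝ, s.card ≤ 2 ∧ πs k ((↑s : Set ℝ)ᶜ) = 0) ∧
      Tendsto (fun k => Vinf (πs k)) atTop (nhds ((ν - μ ^ 2) / (ν + 1 / 4 - μ))) := by
  have hμ : μ < 1 / 2 := by nlinarith
  obtain ⟨b, -, hb_mem, hb_lim⟩ :=
    exists_seq_strictAnti_tendsto' (show (1 / 2 : ℝ) < 1 by norm_num)
  have hb : ∀ k, b k ∈ Ioc (1 / 2 : ℝ) 1 := fun k => Ioo_subset_Ioc_self (hb_mem k)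
  set πs := fun k => twoPoint (upperMass μ ν (b k)) (lowerAtom μ ν (b k)) (b k)
  have hmem : ∀ k, πs k ∈ momentClass μ ν :=
    fun k => twoPoint_lowerAtom_mem_momentClass hν1 hν2 (hb k)
  have hV : Tendsto (fun k => Vinf (πs k)) atTop (𝓝 ((ν - μ ^ 2) / (ν + 1 / 4 - μ))) := by
    refine ((tendsto_upperMass (by nlinarith)).comp hb_lim).congr fun k => ?_
    exact (Vinf_twoPoint (upperMass_nonneg hν1.le)
      ((lowerAtom_lt (by linarith [(hb k).1]) hν1).trans hμ) (hb k)).symm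
  have hub : (ν - μ ^ 2) / (ν + 1 / 4 - μ) ∈
      upperBounds {x | ∃ π ∈ momentClass μ ν, Vinf π = x} := by
    rintro _ ⟨π, hπ, rfl⟩
    exact Vinf_le_of_mem_momentClass hπ hμ hν1.le
  refine ⟨isLUB_of_mem_closure hub
      (mem_closure_of_tendsto hV (.of_forall fun k => ⟨πs k, hmem k, rfl⟩)), πs,
    fun k => ⟨hmem k, {lowerAtom μ ν (b k), b k}, Finset.card_le_two,
      twoPoint_apply_of_notMem (by simp) (by simp)⟩, hV⟩

/-- **Fractional endpoint branch.** For `0 ≤ μ ≤ 1/2` and `μ² < ν ≤ μ/2`, the supremum of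
`V_∞(π)` over the two-moment class `M(μ,ν)` equals `(ν − μ²)/(ν + 1/4 − μ)`.  The
supremum is sharp: it is the limit of `V_∞` along a sequence of feasible two-point laws,
though it need not be attained. -/
theorem endpoint_fractional_branch (μ ν : ℝ) (hμ0 : 0 ≤ μ) (hμ1 : μ ≤ 1 / 2)
    (hν1 : μ ^ 2 < ν) (hν2 : ν ≤ μ / 2) :
    IsLUB {x | ∃ π ∈ momentClass μ ν, Vinf π = x} ((ν - μ ^ 2) / (ν + 1 / 4 - μ)) ∧
    ∃ πs : ℕ → Measure ℝ,
      (∀ k, πs k ∈ momentClass μ ν ∧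
        ∃ s : Finset ℝ, s.card ≤ 2 ∧ πs k ((↑s : Set ℝ)ᶜ) = 0) ∧
      Tendsto (fun k => Vinf (πs k)) atTop (nhds ((ν - μ ^ 2) / (ν + 1 / 4 - μ))) :=
  endpoint_fractional_branch_general μ ν hν1 hν2
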